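/- arXiv:1110.5786 — 3 statements merged into one kernel-verified Lean document; each statement's English description precedes it below -/
import Mathlib

section
/- Let G ≤ Diff̂(ℂ²,0) be a subgroup and suppose there exist two commuting formal vector fields X̂₁, X̂₂ ∈ X̂(ℂ²,0) (that is, [X̂₁,X̂₂] = 0), each invariant by G, which are linearly independent over K̂₂ (writing X̂ⱼ = Aⱼ ∂/∂x + Bⱼ ∂/∂y, this means A₁B₂ − A₂B₁ ≠ 0). Then there exist two closed formal meromorphic one-forms ω̂₁, ω̂₂, linearly independent over K̂₂, each invariant by G; indeed one may take them dual to the vector fields, ω̂ᵢ(X̂ⱼ) = δᵢⱼ. -/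
noncomputable section

namespace FormalGroups

/-- Formal power series in `n` complex variables: `ℂ[[z₁,…,zₙ]]`. -/
abbrev FPS (n : ℕ) := MvPowerSeries (Fin n) ℂ

/-- Formal vector fields on `(ℂⁿ,0)`: derivations of `ℂ[[z₁,…,zₙ]]`. -/
abbrev FVF (n : ℕ) := Derivation ℂ (FPS n) (FPS n)

/-- The group of formal diffeomorphisms of `(ℂⁿ,0)`, encoded (isomorphically,
via the pullback action on power series) as the opposite of the group of
`ℂ`-algebra automorphisms of `ℂ[[z₁,…,zₙ]]`.  For `f : FDiff n`, `f.unop` is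
the pullback `h ↦ h ∘ f`; multiplication `f * g` corresponds to the
composition `f ∘ g` of formal diffeomorphisms. -/
abbrev FDiff (n : ℕ) := (FPS n ≃ₐ[ℂ] FPS n)ᵐᵒᵖ

/-- The coordinate power series `zᵢ`. -/
def Z {n : ℕ} (i : Fin n) : FPS n := MvPowerSeries.X i

/-- The `i`-th component power series `f̂ᵢ` of a formal diffeomorphism. -/
def comp {n : ℕ} (f : FDiff n) (i : Fin n) : FPS n := f.unop (Z i)

/-- Total degree of a monomial exponent. -/
def deg {n : ℕ} (d : Fin n →₀ ℕ) : ℕ := d.sum fun _ m => m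

/-- A formal vector field belongs to `X̂(ℂⁿ,0)`: its coefficients vanish at `0`. -/
def VanishesAtZero {n : ℕ} (X : FVF n) : Prop :=
  ∀ i, MvPowerSeries.constantCoeff (X (Z i)) = 0

/-- `f` is tangent to the identity: `f(z) = z + (order ≥ 2)`. -/
def TangentToId {n : ℕ} (f : FDiff n) : Prop :=
  (∀ i, MvPowerSeries.constantCoeff (comp f i) = 0) ∧
  ∀ i j, MvPowerSeries.coeff (Finsupp.single j 1) (comp f i) = if j = i then 1 else 0

/-- `f = exp (t X)`, expressed coefficientwise: `f̂ᵢ = Σ_j (tʲ/j!) X̂ʲ(zᵢ)`. -/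
def IsExpT {n : ℕ} (f : FDiff n) (t : ℂ) (X : FVF n) : Prop :=
  ∀ i d, MvPowerSeries.coeff d (comp f i) =
    ∑' j : ℕ, (t ^ j / (Nat.factorial j : ℂ)) * MvPowerSeries.coeff d ((⇑X)^[j] (Z i))

/-- `f = exp X`. -/
def IsExp {n : ℕ} (f : FDiff n) (X : FVF n) : Prop := IsExpT f 1 X

/-- The vector field `X` is invariant by the formal diffeomorphism `f`
(`f_* X = X`), i.e. `X` commutes with the pullback of `f`. -/
def InvariantBy {n : ℕ} (f : FDiff n) (X : FVF n) : Prop :=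
  ∀ h, X (f.unop h) = f.unop (X h)

/-- `f_* X = c • X`  (projective invariance, with factor `c`). -/
def ProjInvariantBy {n : ℕ} (f : FDiff n) (X : FVF n) (c : ℂ) : Prop :=
  ∀ h, X (f.unop h) = c • f.unop (X h)

/-- The two vector fields commute: `[X,Y] = 0`. -/
def CommuteVF {n : ℕ} (X Y : FVF n) : Prop := ∀ h, X (Y h) = Y (X h)

/-- All terms of the power series have degree at least `m`. -/
def OrderGE {n : ℕ} (F : FPS n) (m : ℕ) : Prop :=
  ∀ d, deg d < m → MvPowerSeries.coeff d F = 0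

/-- The vector field vanishes to order at least `m` at the origin. -/
def VFOrderGE {n : ℕ} (X : FVF n) (m : ℕ) : Prop := ∀ i, OrderGE (X (Z i)) m

/-- `f` is tangent to the identity with order (exactly) `k`:
`f(z) = z + f_{k+1}(z) + ⋯` with `f_{k+1} ≠ 0`. -/
def TangentOrder {n : ℕ} (f : FDiff n) (k : ℕ) : Prop :=
  1 ≤ k ∧
  (∀ i d, deg d ≤ k → MvPowerSeries.coeff d (comp f i) = MvPowerSeries.coeff d (Z i)) ∧
  ∃ i d, deg d = k + 1 ∧ MvPowerSeries.coeff d (comp f i) ≠ 0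

/-- A dicritic diffeomorphism of order `k`: `f(z) = z + p(z)·z + (order ≥ k+2)`,
with `p ≠ 0` homogeneous of degree `k`. -/
def IsDicriticDiffeo {n : ℕ} (f : FDiff n) (k : ℕ) : Prop :=
  1 ≤ k ∧
  (∀ i d, deg d ≤ k → MvPowerSeries.coeff d (comp f i) = MvPowerSeries.coeff d (Z i)) ∧
  ∃ p : MvPolynomial (Fin n) ℂ, p.IsHomogeneous k ∧ p ≠ 0 ∧
    ∀ i d, deg d = k + 1 →
      MvPowerSeries.coeff d (comp f i) = MvPowerSeries.coeff d ((p : FPS n) * Z i)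

/-- A dicritic vector field of index `k` (order `k+1`):
`X = p(z)·R⃗ + (order ≥ k+2)` with `p ≠ 0` homogeneous of degree `k`,
where `R⃗ = Σ zᵢ ∂/∂zᵢ` is the radial vector field. -/
def IsDicriticVF {n : ℕ} (X : FVF n) (k : ℕ) : Prop :=
  1 ≤ k ∧ VFOrderGE X (k + 1) ∧
  ∃ p : MvPolynomial (Fin n) ℂ, p.IsHomogeneous k ∧ p ≠ 0 ∧
    ∀ i d, deg d = k + 1 →
      MvPowerSeries.coeff d (X (Z i)) = MvPowerSeries.coeff d ((p : FPS n) * Z i)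

/-- A regular dicritic vector field of index `k`: dicritic, and for the
homogeneous parts `pᵢ = q i` of degree `k+2` there are indices `i₀, j₀` with
`p` and `z_{j₀} q_{i₀} − z_{i₀} q_{j₀}` coprime. -/
def IsRegDicriticVF {n : ℕ} (X : FVF n) (k : ℕ) : Prop :=
  1 ≤ k ∧ VFOrderGE X (k + 1) ∧
  ∃ (p : MvPolynomial (Fin n) ℂ) (q : Fin n → MvPolynomial (Fin n) ℂ),
    p.IsHomogeneous k ∧ p ≠ 0 ∧
    (∀ i d, deg d = k + 1 →
      MvPowerSeries.coeff d (X (Z i)) = MvPowerSeries.coeff d ((p : FPS n) * Z i)) ∧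
    (∀ i, (q i).IsHomogeneous (k + 2)) ∧
    (∀ i d, deg d = k + 2 →
      MvPowerSeries.coeff d (X (Z i)) = MvPolynomial.coeff d (q i)) ∧
    ∃ i₀ j₀ : Fin n,
      IsRelPrime p (MvPolynomial.X j₀ * q i₀ - MvPolynomial.X i₀ * q j₀)

/-- A regular dicritic diffeomorphism: its infinitesimal generator
`log f` is a regular dicritic vector field. -/
def IsRegDicriticDiffeo {n : ℕ} (f : FDiff n) (k : ℕ) : Prop :=
  ∃ X : FVF n, IsRegDicriticVF X k ∧ IsExp f X

/-- The derivative (linear part) `Df(0)` of `f` at `0`, as a matrix. -/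
def Dmat {n : ℕ} (f : FDiff n) : Matrix (Fin n) (Fin n) ℂ :=
  Matrix.of fun i j => MvPowerSeries.coeff (Finsupp.single j 1) (comp f i)

/-- `L` is the linear diffeomorphism `z ↦ M z`. -/
def IsLinearWith {n : ℕ} (L : FDiff n) (M : Matrix (Fin n) (Fin n) ℂ) : Prop :=
  ∀ i, comp L i = ∑ j, M i j • Z j

/-- Formal partial derivative `∂/∂zᵢ` on `ℂ[[z₁,…,zₙ]]`. -/
def pd {n : ℕ} (i : Fin n) (F : FPS n) : FPS n :=
  fun d => ((d i : ℂ) + 1) * MvPowerSeries.coeff (d + Finsupp.single i 1) F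

/-- A formal meromorphic one-form `Σⱼ (Aⱼ/C) dzⱼ`, presented with a common
denominator `C ≠ 0` (its coefficients are elements `Aⱼ/C` of the fraction
field `K̂ₙ` of `ℂ[[z₁,…,zₙ]]`). -/
structure MeroForm (n : ℕ) where
  A : Fin n → FPS n
  C : FPS n
  hC : C ≠ 0

/-- The one-form is closed (`dω = 0`), with denominators cleared. -/
def FormClosed {n : ℕ} (ω : MeroForm n) : Prop :=
  ∀ i j, pd i (ω.A j) * ω.C - ω.A j * pd i ω.C = pd j (ω.A i) * ω.C - ω.A i * pd j ω.C

/-- `g*ω = ω` (invariance of the one-form under pullback), denominators cleared. -/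
def FormInvariantBy {n : ℕ} (g : FDiff n) (ω : MeroForm n) : Prop :=
  ∀ j, (∑ i, g.unop (ω.A i) * pd j (comp g i)) * ω.C = ω.A j * g.unop ω.C

/-- `g*ω = a ω₁ + b ω₂`, denominators cleared. -/
def FormPullbackComb {n : ℕ} (g : FDiff n) (ω ω₁ ω₂ : MeroForm n) (a b : ℂ) : Prop :=
  ∀ j, (∑ i, g.unop (ω.A i) * pd j (comp g i)) * (ω₁.C * ω₂.C)
    = (a • (ω₁.A j * ω₂.C) + b • (ω₂.A j * ω₁.C)) * g.unop ω.C

/-- `ω₁, ω₂` are `ℂ`-linearly independent as meromorphic one-forms. -/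
def FormsIndepC {n : ℕ} (ω₁ ω₂ : MeroForm n) : Prop :=
  ∀ a b : ℂ, (∀ j, a • (ω₁.A j * ω₂.C) + b • (ω₂.A j * ω₁.C) = 0) → a = 0 ∧ b = 0

/-- A formal curve: a nonzero non-invertible formal series. -/
def IsFormalCurve (φ : FPS 2) : Prop :=
  φ ≠ 0 ∧ MvPowerSeries.constantCoeff φ = 0

/-- The formal curve `φ` is invariant by `f`: `φ ∘ f = u·φ` for a unit `u`. -/
def CurveInvariantBy (f : FDiff 2) (φ : FPS 2) : Prop :=
  ∃ u : FPS 2, IsUnit u ∧ f.unop φ = u * φ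

/-- Linear coefficient of `φ` in the variable `zᵢ` (the differential `Dφ(0)`). -/
def lc (i : Fin 2) (φ : FPS 2) : ℂ := MvPowerSeries.coeff (Finsupp.single i 1) φ

/-- The formal curves `φ, ψ` are transverse: each tangent space (kernel of the
differential at `0`) is one-dimensional and together they span `ℂ²`;
equivalently the two differentials at `0` are linearly independent. -/
def Transverse (φ ψ : FPS 2) : Prop :=
  lc 0 φ * lc 1 ψ - lc 1 φ * lc 0 ψ ≠ 0

/-- The formal power series is convergent (defines a germ of holomorphic
function): its coefficients grow at most geometrically. -/
def IsConvergent {n : ℕ} (F : FPS n) : Prop :=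
  ∃ M A : ℝ, ∀ d, ‖MvPowerSeries.coeff d F‖ ≤ M * A ^ deg d

/-- `g* X = (p/q)·X`, denominators cleared: the pullback `g* X = (g⁻¹)_* X`
of the vector field `X` equals the rational multiple `(p/q) X`. -/
def PullbackEqRat {n : ℕ} (g : FDiff n) (X : FVF n) (p q : FPS n) : Prop :=
  ∀ h, q * g.unop (X (g.unop.symm h)) = p * X h

/-- `g* X = s X₁ + t X₂` (pullback of `X` is a constant combination). -/
def PullbackEqComb {n : ℕ} (g : FDiff n) (X X₁ X₂ : FVF n) (s t : ℂ) : Prop :=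
  ∀ h, g.unop (X (g.unop.symm h)) = s • X₁ h + t • X₂ h

end FormalGroups

/-! The forms are read off the adjugate of the coefficient matrix `M = (X̂ₖ(zₘ))`: the
coefficients of `ω̂ᵢ` are the `i`-th column of `adj M` over the denominator `det M`, so that
`ω̂ᵢ(X̂ⱼ) = δᵢⱼ` is the identity `M · adj M = det M · 1`.

Every derivation `D` of `ℂ[[z]]` obeys the chain rule `D = Σₗ D(zₗ) ∂ₗ`: a derivation killing
all `zₗ` raises the order of every series (write `F - F(0) = Σ zₗ Gₗ` by Euler's identity), so it
vanishes. Hence `G`-invariance of the fields reads `g*M = M · (Dg)ᵀ` in coordinates, and then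
`g*(adj M) = adj (Dg)ᵀ · adj M` and `g*(det M) = det M · det Dg` give `g*ω̂ᵢ = ω̂ᵢ`. Closedness
is `dω̂ᵢ(X̂₀, X̂₁) = -ω̂ᵢ([X̂₀, X̂₁]) = 0`, written out in the two coordinates. -/

namespace MvPowerSeries

section CommSemiring

variable {σ R : Type*} [CommSemiring R]

theorem coeff_X_mul_pderiv (i : σ) (F : MvPowerSeries σ R) (d : σ →₀ ℕ) :
    coeff d (X i * pderiv R i F) = d i * coeff d F := by
  classical
  rw [mul_comm, X_def, coeff_mul_monomial, mul_one]
  split_ifs with h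
  · rw [coeff_pderiv, tsub_add_cancel_of_le h, Finsupp.tsub_apply, Finsupp.single_eq_same,
      ← Nat.cast_add_one, Nat.sub_add_cancel (Finsupp.single_le_iff.mp h), mul_comm]
  · rw [show d i = 0 by simpa [Finsupp.single_le_iff] using h, Nat.cast_zero, zero_mul]

theorem coeff_sum_X_mul_pderiv [Fintype σ] (F : MvPowerSeries σ R) (d : σ →₀ ℕ) :
    coeff d (∑ i, X i * pderiv R i F) = d.degree * coeff d F := by
  simp only [map_sum, coeff_X_mul_pderiv, ← Finset.sum_mul, Finsupp.degree_eq_sum, Nat.cast_sum]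

end CommSemiring

variable {σ K : Type*} [Fintype σ] [Field K] [CharZero K]

theorem exists_eq_sum_X_mul {F : MvPowerSeries σ K} (hF : constantCoeff F = 0) :
    ∃ G : σ → MvPowerSeries σ K, F = ∑ i, X i * G i := by
  -- `Σ Xᵢ ∂ᵢ` multiplies the coefficient of `z^d` by `|d|`, so `P` is a preimage of `F`.
  let P : MvPowerSeries σ K := fun d => (d.degree : K)⁻¹ * coeff d F
  refine ⟨fun i => pderiv K i P, ?_⟩
  ext d
  rw [coeff_sum_X_mul_pderiv]
  change coeff d F = d.degree * ((d.degree : K)⁻¹ * coeff d F)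
  rcases eq_or_ne d 0 with rfl | hd
  · simp [hF]
  · have : (d.degree : K) ≠ 0 := by exact_mod_cast (Finsupp.degree_eq_zero_iff d).not.mpr hd
    field_simp

theorem derivation_eq_zero_of_map_X {D : Derivation K (MvPowerSeries σ K) (MvPowerSeries σ K)}
    (hD : ∀ i, D (X i) = 0) : D = 0 := by
  have hord : ∀ (N : ℕ) F, (N : ℕ∞) ≤ (D F).order := by
    intro N
    induction N with
    | zero => simp
    | succ N ih =>
      intro F
      obtain ⟨G, hG⟩ := exists_eq_sum_X_mul (F := F - C (constantCoeff F)) (by simp)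
      have hDF : D F = ∑ i, X i * D (G i) := by
        rw [← sub_add_cancel F (C (constantCoeff F)), map_add, hG, c_eq_algebraMap,
          D.map_algebraMap, map_sum]
        simp [hD]
      rw [hDF]
      refine Finset.sum_induction _ (fun H : MvPowerSeries σ K => ((N + 1 : ℕ) : ℕ∞) ≤ H.order)
        (fun _ _ h₁ h₂ => (le_min h₁ h₂).trans min_order_le_add) (by simp) fun i _ => ?_
      calc ((N + 1 : ℕ) : ℕ∞) = 1 + N := by push_cast; ring
        _ ≤ (X i).order + (D (G i)).order := by
          gcongr
          · exact one_le_order_iff_constCoeff_eq_zero.mpr (constantCoeff_X i)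
          · exact ih _
        _ ≤ _ := le_order_mul
  exact Derivation.ext fun F => order_eq_top_iff.mp (ENat.eq_top_iff_forall_ge.mpr (hord · F))

theorem derivation_apply_eq_sum_mul_pderiv
    (D : Derivation K (MvPowerSeries σ K) (MvPowerSeries σ K)) (F : MvPowerSeries σ K) :
    D F = ∑ i, D (X i) * pderiv K i F := by
  classical
  set D' := ∑ i, D (X i) • pderiv K i
  have hD' : ∀ F, D' F = ∑ i, D (X i) * pderiv K i F := fun F => by
    rw [← Derivation.coeFnAddMonoidHom_apply, map_sum, Finset.sum_apply]
    rfl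
  have hE := derivation_eq_zero_of_map_X (D := D - D') fun j => by
    rw [Derivation.sub_apply, hD', Finset.sum_eq_single j (fun i _ hij => by
      rw [pderiv_X_of_ne (Ne.symm hij), mul_zero]) (by simp), pderiv_X_self, mul_one, sub_self]
  rw [← hD', ← sub_eq_zero, ← Derivation.sub_apply, hE, Derivation.zero_apply]

end MvPowerSeries

namespace FormalGroups

open MvPowerSeries Matrix

variable {n : ℕ}

theorem pd_eq_pderiv (i : Fin n) (F : FPS n) : pd i F = pderiv ℂ i F := by
  ext d
  rw [coeff_pderiv]
  exact mul_comm _ _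

theorem FVF.apply_eq_sum_mul_pd (V : FVF n) (F : FPS n) : V F = ∑ l, V (Z l) * pd l F := by
  simp only [pd_eq_pderiv]
  exact derivation_apply_eq_sum_mul_pderiv V F

def coeffMatrix (X : Fin n → FVF n) : Matrix (Fin n) (Fin n) (FPS n) :=
  of fun k m => X k (Z m)

def jacobian (g : FDiff n) : Matrix (Fin n) (Fin n) (FPS n) :=
  of fun i l => pd l (comp g i)

theorem coeffMatrix_map_of_invariantBy {g : FDiff n} {X : Fin n → FVF n}
    (hg : ∀ k, InvariantBy g (X k)) :
    (coeffMatrix X).map g.unop = coeffMatrix X * (jacobian g)ᵀ := by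
  ext1 k m
  rw [map_apply, coeffMatrix, of_apply, ← hg k (Z m), FVF.apply_eq_sum_mul_pd]
  rfl

def dualForm (X : Fin n → FVF n) (hX : (coeffMatrix X).det ≠ 0) (i : Fin n) : MeroForm n :=
  ⟨fun l => adjugate (coeffMatrix X) l i, (coeffMatrix X).det, hX⟩

theorem sum_dualForm_mul (X : Fin n → FVF n) (hX : (coeffMatrix X).det ≠ 0) (i j : Fin n) :
    ∑ l, (dualForm X hX i).A l * X j (Z l) = (if i = j then 1 else 0) * (dualForm X hX i).C := by
  calc ∑ l, (dualForm X hX i).A l * X j (Z l)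
      = (coeffMatrix X * adjugate (coeffMatrix X)) j i :=
        Finset.sum_congr rfl fun l _ => mul_comm _ _
    _ = _ := by
        simp only [mul_adjugate, Matrix.smul_apply, one_apply, smul_eq_mul, mul_comm, eq_comm]
        rfl

theorem formInvariantBy_dualForm {g : FDiff n} {X : Fin n → FVF n}
    (hg : ∀ k, InvariantBy g (X k)) (hX : (coeffMatrix X).det ≠ 0) (i : Fin n) :
    FormInvariantBy g (dualForm X hX i) := by
  set M := coeffMatrix X
  set J := jacobian g
  let φ : FPS n →+* FPS n := g.unop
  have hM : M.map φ = M * Jᵀ := coeffMatrix_map_of_invariantBy hg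
  have hadj : (adjugate M).map φ = adjugate Jᵀ * adjugate M := by
    rw [← RingHom.mapMatrix_apply, RingHom.map_adjugate, RingHom.mapMatrix_apply, hM,
      adjugate_mul_distrib]
  have hdet : φ M.det = M.det * J.det := by
    rw [RingHom.map_det, RingHom.mapMatrix_apply, hM, det_mul, det_transpose]
  intro j
  have hsum : ∑ l, φ (adjugate M l i) * J l j = J.det * adjugate M j i := by
    calc ∑ l, φ (adjugate M l i) * J l j = (Jᵀ * (adjugate M).map φ) j i :=
          Finset.sum_congr rfl fun l _ => mul_comm _ _
      _ = J.det * adjugate M j i := by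
          rw [hadj, ← Matrix.mul_assoc, mul_adjugate, det_transpose, smul_mul, Matrix.one_mul,
            Matrix.smul_apply, smul_eq_mul]
  change (∑ l, φ (adjugate M l i) * J l j) * M.det = adjugate M j i * φ M.det
  rw [hsum, hdet]
  ring

theorem CommuteVF.sum_mul_pd_eq {V W : FVF n} (h : CommuteVF V W) (F : FPS n) :
    ∑ l, V (Z l) * pd l (W F) = ∑ l, W (Z l) * pd l (V F) := by
  rw [← FVF.apply_eq_sum_mul_pd, ← FVF.apply_eq_sum_mul_pd]
  exact h F

theorem formClosed_of_fin_two (ω : MeroForm 2)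
    (h : pd 0 (ω.A 1) * ω.C - ω.A 1 * pd 0 ω.C = pd 1 (ω.A 0) * ω.C - ω.A 0 * pd 1 ω.C) :
    FormClosed ω := by
  intro i j
  fin_cases i <;> fin_cases j
  exacts [rfl, h, h.symm, rfl]

theorem formClosed_dualForm {X : Fin 2 → FVF 2} (hcomm : CommuteVF (X 0) (X 1))
    (hX : (coeffMatrix X).det ≠ 0) (i : Fin 2) : FormClosed (dualForm X hX i) := by
  have h0 := hcomm.sum_mul_pd_eq (Z 0)
  have h1 := hcomm.sum_mul_pd_eq (Z 1)
  simp only [Fin.sum_univ_two, pd_eq_pderiv] at h0 h1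
  apply formClosed_of_fin_two
  fin_cases i <;>
    simp only [dualForm, adjugate_fin_two, det_fin_two, coeffMatrix, of_apply, Fin.zero_eta,
      Fin.mk_one, cons_val', cons_val_zero, cons_val_one, cons_val_fin_one, pd_eq_pderiv, map_sub,
      map_neg, Derivation.leibniz, smul_eq_mul]
  · linear_combination (-(X 1 (Z 1))) * h0 + X 1 (Z 0) * h1
  · linear_combination X 0 (Z 1) * h0 - X 0 (Z 0) * h1

theorem invariant_closed_one_forms_of_invariant_vector_fields_general
    (G : Subgroup (FDiff 2)) (X : Fin 2 → FVF 2)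
    (hcomm : CommuteVF (X 0) (X 1))
    (hinv : ∀ g ∈ G, ∀ j, InvariantBy g (X j))
    (hindep : (X 0) (Z 0) * (X 1) (Z 1) - (X 1) (Z 0) * (X 0) (Z 1) ≠ 0) :
    ∃ ω : Fin 2 → MeroForm 2,
      (∀ i, FormClosed (ω i)) ∧
      (∀ g ∈ G, ∀ i, FormInvariantBy g (ω i)) ∧
      ((ω 0).A 0 * (ω 1).A 1 - (ω 0).A 1 * (ω 1).A 0 ≠ 0) ∧
      (∀ i j, (∑ l, (ω i).A l * (X j) (Z l)) = (if i = j then 1 else 0) * (ω i).C) := by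
  have hdet : (coeffMatrix X).det = (X 0) (Z 0) * (X 1) (Z 1) - (X 1) (Z 0) * (X 0) (Z 1) := by
    rw [det_fin_two]
    simp [coeffMatrix, mul_comm]
  have hX : (coeffMatrix X).det ≠ 0 := hdet ▸ hindep
  refine ⟨dualForm X hX, formClosed_dualForm hcomm hX,
    fun g hg => formInvariantBy_dualForm (hinv g hg) hX, ?_, sum_dualForm_mul X hX⟩
  simpa [dualForm, adjugate_fin_two, coeffMatrix, mul_comm] using hindep

/-- a subgroup of `Diff̂(ℂ²,0)` preserving two commuting formal
vector fields, linearly independent over `K̂₂`, preserves two closed formal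
meromorphic one-forms, linearly independent over `K̂₂`; one may take them dual
to the vector fields: `ωᵢ(X̂ⱼ) = δᵢⱼ`. -/
theorem invariant_closed_one_forms_of_invariant_vector_fields
    (G : Subgroup (FDiff 2)) (X : Fin 2 → FVF 2)
    (h0 : ∀ j, VanishesAtZero (X j))
    (hcomm : CommuteVF (X 0) (X 1))
    (hinv : ∀ g ∈ G, ∀ j, InvariantBy g (X j))
    (hindep : (X 0) (Z 0) * (X 1) (Z 1) - (X 1) (Z 0) * (X 0) (Z 1) ≠ 0) :
    ∃ ω : Fin 2 → MeroForm 2,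
      (∀ i, FormClosed (ω i)) ∧
      (∀ g ∈ G, ∀ i, FormInvariantBy g (ω i)) ∧
      ((ω 0).A 0 * (ω 1).A 1 - (ω 0).A 1 * (ω 1).A 0 ≠ 0) ∧
      (∀ i j, (∑ l, (ω i).A l * (X j) (Z l)) = (if i = j then 1 else 0) * (ω i).C) :=
  invariant_closed_one_forms_of_invariant_vector_fields_general G X hcomm hinv hindep

end FormalGroups
end
end

section
/- Let X̂ ∈ X̂_k(ℂⁿ,0), k ≥ 1, be a formal vector field vanishing to order ≥ 2 at the origin, and let f̂ ∈ Diff̂(ℂⁿ,0). If f̂ commutes with the time-one map exp(X̂), then f̂ commutes with exp(tX̂) for every t ∈ ℂ. -/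
noncomputable section

namespace FormalGroups
open MvPowerSeries

/-!
Everything is controlled by the order filtration of `ℂ[[z₁,…,zₙ]]`. A vector field of order `≥ 2`
raises orders by one, so in each degree `exp (t X̂) = Σ tʲ/j! X̂ʲ` is a finite sum, and the iterated
Leibniz rule makes it an algebra endomorphism. Algebra endomorphisms and derivations of
`ℂ[[z₁,…,zₙ]]` are determined by their values on the coordinates, so a formal diffeomorphism is
`exp (t X̂)` as soon as its components are.

Conjugating by `f̂` gives `f̂ ∘ exp X̂ ∘ f̂⁻¹ = exp (f̂_* X̂)`, hence `exp X̂ = exp (f̂_* X̂)`. The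
logarithm is unique: if `(X̂ - Ŷ) zᵢ` has order `m ≥ 2` for all `i`, then `(X̂ʲ - Ŷʲ) zᵢ` has order
`≥ m + j - 1`, so in degree `m` the time-one maps differ on `zᵢ` exactly by `(X̂ - Ŷ) zᵢ`. Thus
`f̂_* X̂ = X̂`: `f̂` commutes with `X̂`, with all its iterates, and so with every `exp (t X̂)`.
-/

variable {n m : ℕ}

lemma deg_eq_degree (d : Fin n →₀ ℕ) : deg d = d.degree := rfl

lemma deg_sub_single_add_one {d : Fin n →₀ ℕ} {i : Fin n} (h : Finsupp.single i 1 ≤ d) :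
    deg (d - Finsupp.single i 1) + 1 = deg d := by
  simp only [deg_eq_degree]
  conv_rhs => rw [← tsub_add_cancel_of_le h, map_add, Finsupp.degree_single]

lemma orderGE_zero_left (N : ℕ) : OrderGE (0 : FPS n) N := fun _ _ => map_zero _

lemma orderGE_zero_right (F : FPS n) : OrderGE F 0 := fun _ hd => absurd hd (Nat.not_lt_zero _)

namespace OrderGE

variable {F G : FPS n} {N M : ℕ}

lemma mono (hF : OrderGE F N) (hMN : M ≤ N) : OrderGE F M :=
  fun d hd => hF d (hd.trans_le hMN)

lemma add (hF : OrderGE F N) (hG : OrderGE G N) : OrderGE (F + G) N := fun d hd => by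
  rw [map_add, hF d hd, hG d hd, add_zero]

lemma sub (hF : OrderGE F N) (hG : OrderGE G N) : OrderGE (F - G) N := fun d hd => by
  rw [map_sub, hF d hd, hG d hd, sub_zero]

lemma smul (c : ℂ) (hF : OrderGE F N) : OrderGE (c • F) N := fun d hd => by
  rw [map_smul, hF d hd, smul_zero]

lemma of_smul {c : ℂ} (hc : c ≠ 0) (hF : OrderGE (c • F) N) : OrderGE F N := by
  simpa [hc] using hF.smul c⁻¹

lemma sum {ι : Type*} {s : Finset ι} {F : ι → FPS n} (hF : ∀ i ∈ s, OrderGE (F i) N) :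
    OrderGE (∑ i ∈ s, F i) N := fun d hd => by
  rw [map_sum]
  exact Finset.sum_eq_zero fun i hi => hF i hi d hd

lemma iff_le_order : OrderGE F N ↔ (N : ℕ∞) ≤ F.order :=
  ⟨nat_le_order, fun h d hd => coeff_of_lt_order (lt_of_lt_of_le (by exact_mod_cast hd) h)⟩

lemma mul (hF : OrderGE F N) (hG : OrderGE G M) : OrderGE (F * G) (N + M) := by
  rw [iff_le_order] at *
  push_cast
  exact (add_le_add hF hG).trans le_order_mul

lemma mul_left (H : FPS n) (hG : OrderGE G M) : OrderGE (H * G) M := by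
  simpa using (orderGE_zero_right H).mul hG

end OrderGE

lemma orderGE_one_iff {F : FPS n} : OrderGE F 1 ↔ constantCoeff F = 0 := by
  simp [OrderGE, deg_eq_degree, Finsupp.degree_eq_zero_iff]

lemma orderGE_Z (i : Fin n) : OrderGE (Z i) 1 :=
  orderGE_one_iff.2 (constantCoeff_X i)

lemma eq_of_forall_orderGE_sub {F G : FPS n} (h : ∀ N, OrderGE (F - G) N) : F = G := by
  ext d
  simpa [sub_eq_zero] using h (deg d + 1) d (Nat.lt_succ_self _)

lemma coeff_mul_Z (F : FPS n) (d : Fin n →₀ ℕ) (i : Fin n) :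
    coeff d (F * Z i) =
      if Finsupp.single i 1 ≤ d then coeff (d - Finsupp.single i 1) F else 0 := by
  rw [Z, X, coeff_mul_monomial, mul_one]

-- Euler's identity `deg · F = Σ zᵢ ∂F/∂zᵢ` gives the decomposition.
lemma exists_eq_sum_mul_Z {F : FPS n} {N : ℕ} (hF : OrderGE F (N + 1)) :
    ∃ G : Fin n → FPS n, F = ∑ i, G i * Z i ∧ ∀ i, OrderGE (G i) N := by
  let G : Fin n → FPS n := fun i d =>
    coeff (d + Finsupp.single i 1) F * ((d + Finsupp.single i 1 : Fin n →₀ ℕ) i : ℂ) /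
      deg (d + Finsupp.single i 1)
  have coeff_G (i d) : coeff d (G i) =
      coeff (d + Finsupp.single i 1) F * ((d + Finsupp.single i 1 : Fin n →₀ ℕ) i : ℂ) /
        deg (d + Finsupp.single i 1) := rfl
  have coeff_G_mul_Z (i d) : coeff d (G i * Z i) = coeff d F * d i / deg d := by
    rw [coeff_mul_Z]
    split_ifs with h
    · rw [coeff_G, tsub_add_cancel_of_le h]
    · rw [Finsupp.single_le_iff, not_le, Nat.lt_one_iff] at h
      simp [h]
  refine ⟨G, ?_, fun i d hd => ?_⟩
  · ext d
    rw [map_sum]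
    simp only [coeff_G_mul_Z, ← Finset.sum_div, ← Finset.mul_sum]
    rcases eq_or_ne d 0 with rfl | hd
    · simpa using orderGE_one_iff.1 (hF.mono (by omega))
    · rw [← Nat.cast_sum, ← Finsupp.degree_eq_sum, ← deg_eq_degree, mul_div_assoc, div_self,
        mul_one]
      rwa [Nat.cast_ne_zero, deg_eq_degree, ne_eq, Finsupp.degree_eq_zero_iff]
  · rw [coeff_G, hF, zero_mul, zero_div]
    rw [deg_eq_degree, map_add, Finsupp.degree_single, ← deg_eq_degree]
    omega

-- If `c ≠ 0` then `zᵢ - c` is a unit, hence so is `Φ zᵢ - c`.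
lemma constantCoeff_algHom_Z (Φ : FPS n →ₐ[ℂ] FPS m) (i : Fin n) :
    constantCoeff (Φ (Z i)) = 0 := by
  by_contra hc
  have hunit : IsUnit (Z i - C (constantCoeff (Φ (Z i)))) := by
    rw [isUnit_iff_constantCoeff]
    simpa [Z] using hc
  have := isUnit_iff_constantCoeff.1 (hunit.map Φ)
  rw [map_sub, c_eq_algebraMap, AlgHom.commutes, ← c_eq_algebraMap, map_sub, constantCoeff_C,
    sub_self] at this
  exact not_isUnit_zero this

lemma OrderGE.map_algHom (Φ : FPS n →ₐ[ℂ] FPS m) {F : FPS n} {N : ℕ} (hF : OrderGE F N) :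
    OrderGE (Φ F) N := by
  induction N generalizing F with
  | zero => exact orderGE_zero_right _
  | succ N ih =>
    obtain ⟨G, rfl, hG⟩ := exists_eq_sum_mul_Z hF
    rw [map_sum]
    exact OrderGE.sum fun i _ => by
      rw [map_mul]
      exact (ih (hG i)).mul (orderGE_one_iff.2 (constantCoeff_algHom_Z Φ i))

lemma algHom_ext_of_Z {Φ Ψ : FPS n →ₐ[ℂ] FPS m} (h : ∀ i, Φ (Z i) = Ψ (Z i)) : Φ = Ψ := by
  have on_poly : Φ.comp (MvPolynomial.coeToMvPowerSeries.algHom ℂ) =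
      Ψ.comp (MvPolynomial.coeToMvPowerSeries.algHom ℂ) :=
    MvPolynomial.algHom_ext fun i => by simpa [Z] using h i
  ext F : 1
  refine eq_of_forall_orderGE_sub fun N => ?_
  set p := (truncTotal N F : FPS n)
  have hp : OrderGE (F - p) N := fun d hd => by
    rw [map_sub, MvPolynomial.coeff_coe, coeff_truncTotal _ hd, sub_self]
  have hΦΨ : Φ p = Ψ p := by simpa using congr($on_poly (truncTotal N F))
  have : Φ F - Ψ F = Φ (F - p) - Ψ (F - p) := by
    rw [map_sub, map_sub, hΦΨ, sub_sub_sub_cancel_right]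
  rw [this]
  exact (hp.map_algHom Φ).sub (hp.map_algHom Ψ)

open Finset in
lemma Derivation.iterate_map_mul {R A : Type*} [CommSemiring R] [CommSemiring A] [Algebra R A]
    (D : Derivation R A A) (j : ℕ) (a b : A) :
    D^[j] (a * b) = ∑ p ∈ antidiagonal j, j.choose p.1 • (D^[p.1] a * D^[p.2] b) := by
  induction j with
  | zero => simp
  | succ j ih =>
    rw [sum_antidiagonal_choose_succ_nsmul (fun i k => D^[i] a * D^[k] b) j]
    simp only [Function.iterate_succ_apply', ih, map_sum, map_nsmul, Derivation.leibniz,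
      smul_eq_mul, nsmul_add, sum_add_distrib]
    refine congrArg _ (sum_congr rfl fun p hp => ?_)
    rw [j.choose_symm_of_eq_add (mem_antidiagonal.1 hp).symm, mul_comm]

def pushforward {R A : Type*} [CommSemiring R] [CommRing A] [Algebra R A] (φ : A ≃ₐ[R] A)
    (D : Derivation R A A) : Derivation R A A :=
  D.liftOfRightInverse (f := φ) φ.apply_symm_apply fun x hx => by
    rw [(map_eq_zero_iff φ φ.injective).1 hx, map_zero, map_zero]

lemma semiconj_pushforward {R A : Type*} [CommSemiring R] [CommRing A] [Algebra R A]
    (φ : A ≃ₐ[R] A) (D : Derivation R A A) : Function.Semiconj φ D (pushforward φ D) :=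
  fun a => (Derivation.liftOfRightInverse_apply _ _ a).symm

section Derivation

variable {D : FVF n} {K : ℕ}

lemma derivation_eq_sum_of_eq_sum {F : FPS n} {G : Fin n → FPS n} (hF : F = ∑ i, G i * Z i) :
    D F = ∑ i, (G i * D (Z i) + Z i * D (G i)) := by
  simp [hF, Derivation.leibniz]

lemma orderGE_derivation_apply (hD : VFOrderGE D (K + 1)) (F : FPS n) :
    OrderGE (D F) (K + 1) := by
  intro d hd
  induction hdeg : deg d using Nat.strong_induction_on generalizing d F with
  | _ m ih =>
  obtain ⟨G, hG, -⟩ := exists_eq_sum_mul_Z (N := 0) (F := F - C (constantCoeff F))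
    (orderGE_one_iff.2 (by simp))
  have hDF : D F = D (F - C (constantCoeff F)) := by
    rw [map_sub, c_eq_algebraMap, D.map_algebraMap, sub_zero]
  rw [hDF, derivation_eq_sum_of_eq_sum hG, map_sum]
  refine Finset.sum_eq_zero fun i _ => ?_
  rw [map_add, OrderGE.mul_left (G i) (hD i) d hd, zero_add, mul_comm, coeff_mul_Z]
  split_ifs with hi
  · have := deg_sub_single_add_one hi
    exact ih _ (by omega) _ _ (by omega) rfl
  · rfl

lemma OrderGE.derivation_apply (hD : VFOrderGE D (K + 1)) {F : FPS n} {N : ℕ}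
    (hF : OrderGE F N) : OrderGE (D F) (N + K) := by
  induction N generalizing F with
  | zero => exact (orderGE_derivation_apply hD F).mono (by omega)
  | succ N ih =>
    obtain ⟨G, hG, hGN⟩ := exists_eq_sum_mul_Z hF
    rw [derivation_eq_sum_of_eq_sum hG]
    refine OrderGE.sum fun i _ => OrderGE.add ?_ ?_
    · exact ((hGN i).mul (hD i)).mono (by omega)
    · exact ((orderGE_Z i).mul (ih (hGN i))).mono (by omega)

lemma derivation_ext_of_Z {D₁ D₂ : FVF n} (h : ∀ i, D₁ (Z i) = D₂ (Z i)) : D₁ = D₂ := by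
  refine Derivation.ext fun F => eq_of_forall_orderGE_sub fun N => ?_
  have hD : VFOrderGE (D₁ - D₂) (N + 1) := fun i => by simp [h i, orderGE_zero_left]
  simpa using (orderGE_derivation_apply hD F).mono (Nat.le_succ N)

lemma VFOrderGE.pushforward (hD : VFOrderGE D (K + 1)) (σ : FPS n ≃ₐ[ℂ] FPS n) :
    VFOrderGE (pushforward σ D) (K + 1) := fun i => by
  rw [← σ.apply_symm_apply (Z i), ← semiconj_pushforward σ D, add_comm]
  exact (((orderGE_Z i).map_algHom σ.symm.toAlgHom).derivation_apply hD).map_algHom σ.toAlgHom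

end Derivation

lemma pow_div_factorial_mul_choose {K : Type*} [Field K] [CharZero K] (t : K) {k j : ℕ}
    (h : k ≤ j) :
    t ^ j / j.factorial * j.choose k =
      t ^ k / k.factorial * (t ^ (j - k) / (j - k).factorial) := by
  rw [Nat.cast_choose K h]
  have := j.factorial_ne_zero
  field_simp
  rw [← pow_add, Nat.add_sub_cancel' h]

section Flow

variable {X Y : FVF n} {t : ℂ}

def expTrunc (X : FVF n) (t : ℂ) (J : ℕ) : Module.End ℂ (FPS n) :=
  ∑ j ∈ Finset.range (J + 1), (t ^ j / j.factorial : ℂ) • (X : Module.End ℂ (FPS n)) ^ j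

lemma expTrunc_apply (J : ℕ) (h : FPS n) :
    expTrunc X t J h = ∑ j ∈ Finset.range (J + 1), (t ^ j / j.factorial : ℂ) • (⇑X)^[j] h := by
  simp [expTrunc, Module.End.pow_apply]

/-- `exp (t X)`, defined degree by degree. It is the exponential only when `X` has order `≥ 2`:
then the terms `Xʲ h` with `j > deg d` have no coefficient in degree `d`. -/
def flow (X : FVF n) (t : ℂ) : FPS n →ₗ[ℂ] FPS n where
  toFun h d := coeff d (expTrunc X t (deg d) h)
  map_add' g h := by
    ext d
    change coeff d (expTrunc X t (deg d) (g + h)) =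
      coeff d (expTrunc X t (deg d) g) + coeff d (expTrunc X t (deg d) h)
    simp
  map_smul' c h := by
    ext d
    change coeff d (expTrunc X t (deg d) (c • h)) = c • coeff d (expTrunc X t (deg d) h)
    simp

lemma coeff_flow (h : FPS n) (d : Fin n →₀ ℕ) :
    coeff d (flow X t h) = coeff d (expTrunc X t (deg d) h) := rfl

lemma OrderGE.iterate_derivation (hX : VFOrderGE X 2) {F : FPS n} {N : ℕ} (hF : OrderGE F N)
    (j : ℕ) : OrderGE ((⇑X)^[j] F) (N + j) := by
  induction j with
  | zero => exact hF
  | succ j ih => rw [Function.iterate_succ_apply']; exact ih.derivation_apply hX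

lemma orderGE_iterate_derivation (hX : VFOrderGE X 2) (F : FPS n) (j : ℕ) :
    OrderGE ((⇑X)^[j] F) j := by
  simpa using (orderGE_zero_right F).iterate_derivation hX j

lemma orderGE_expTrunc_sub (hX : VFOrderGE X 2) {J J' : ℕ} (hJ : J ≤ J') (h : FPS n) :
    OrderGE (expTrunc X t J' h - expTrunc X t J h) (J + 1) := by
  rw [expTrunc_apply, expTrunc_apply, ← Finset.sum_range_add_sum_Ico _ (by omega : J + 1 ≤ J' + 1),
    add_sub_cancel_left]
  exact OrderGE.sum fun j hj =>
    ((orderGE_iterate_derivation hX h j).smul _).mono (Finset.mem_Ico.1 hj).1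

lemma orderGE_flow_sub_expTrunc (hX : VFOrderGE X 2) (h : FPS n) (J : ℕ) :
    OrderGE (flow X t h - expTrunc X t J h) (J + 1) := fun d hd => by
  rw [map_sub, coeff_flow, ← neg_sub, ← map_sub,
    orderGE_expTrunc_sub hX (by omega) h d (Nat.lt_succ_self _), neg_zero]

lemma flow_one : flow X t 1 = 1 := by
  ext d
  simp [coeff_flow, expTrunc_apply, Finset.sum_range_succ', Function.iterate_succ_apply]

-- Both sides are sums of `tᵃ/a! tᵇ/b! Xᵃg Xᵇh`, over `a + b ≤ J` and over `a, b ≤ J`.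
open Finset in
lemma orderGE_expTrunc_mul_sub (hX : VFOrderGE X 2) (g h : FPS n) (J : ℕ) :
    OrderGE (expTrunc X t J g * expTrunc X t J h - expTrunc X t J (g * h)) (J + 1) := by
  set T : ℕ → ℕ → FPS n := fun a b =>
    (t ^ a / a.factorial * (t ^ b / b.factorial) : ℂ) • ((⇑X)^[a] g * (⇑X)^[b] h)
  have hprod : expTrunc X t J g * expTrunc X t J h =
      ∑ a ∈ range (J + 1), ∑ b ∈ range (J + 1), T a b := by
    simp only [expTrunc_apply, sum_mul_sum, T, smul_mul_smul]
  have hmul : expTrunc X t J (g * h) = ∑ a ∈ range (J + 1), ∑ b ∈ range (J + 1 - a), T a b := by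
    rw [← sum_range_diag_flip, expTrunc_apply]
    refine sum_congr rfl fun j _ => ?_
    rw [Derivation.iterate_map_mul, Nat.sum_antidiagonal_eq_sum_range_succ
      (fun k l => j.choose k • ((⇑X)^[k] g * (⇑X)^[l] h)), smul_sum]
    refine sum_congr rfl fun k hk => ?_
    rw [← Nat.cast_smul_eq_nsmul ℂ, smul_smul,
      pow_div_factorial_mul_choose t (Nat.lt_succ_iff.1 (mem_range.1 hk))]
  rw [hprod, hmul, ← sum_sub_distrib]
  refine OrderGE.sum fun a _ => ?_
  rw [← sum_range_add_sum_Ico _ (Nat.sub_le (J + 1) a), add_sub_cancel_left]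
  refine OrderGE.sum fun b hb => ?_
  have := (mem_Ico.1 hb).1
  exact (((orderGE_iterate_derivation hX g a).mul (orderGE_iterate_derivation hX h b)).smul
    _).mono (by omega)

lemma flow_mul (hX : VFOrderGE X 2) (t : ℂ) (g h : FPS n) :
    flow X t (g * h) = flow X t g * flow X t h := by
  refine eq_of_forall_orderGE_sub fun J => OrderGE.mono (N := J + 1) ?_ (Nat.le_succ J)
  set E := expTrunc X t J
  have hsplit : flow X t (g * h) - flow X t g * flow X t h =
      (flow X t (g * h) - E (g * h)) - (E g * E h - E (g * h))
        - flow X t h * (flow X t g - E g) - E g * (flow X t h - E h) := by ring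
  rw [hsplit]
  exact (((orderGE_flow_sub_expTrunc hX _ J).sub (orderGE_expTrunc_mul_sub hX g h J)).sub
    (.mul_left _ (orderGE_flow_sub_expTrunc hX _ J))).sub
    (.mul_left _ (orderGE_flow_sub_expTrunc hX _ J))

def flowAlgHom (hX : VFOrderGE X 2) (t : ℂ) : FPS n →ₐ[ℂ] FPS n :=
  AlgHom.ofLinearMap (flow X t) flow_one (flow_mul hX t)

lemma coeff_flow_eq_tsum (hX : VFOrderGE X 2) (h : FPS n) (d : Fin n →₀ ℕ) :
    coeff d (flow X t h) = ∑' j : ℕ, (t ^ j / j.factorial : ℂ) * coeff d ((⇑X)^[j] h) := by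
  rw [tsum_eq_sum (s := Finset.range (deg d + 1)) fun j hj => ?_, coeff_flow, expTrunc_apply]
  · simp
  · rw [orderGE_iterate_derivation hX h j d (by simpa using hj), mul_zero]

lemma isExpT_iff (hX : VFOrderGE X 2) {e : FDiff n} :
    IsExpT e t X ↔ ∀ i, e.unop (Z i) = flow X t (Z i) := by
  simp only [IsExpT, comp, ← coeff_flow_eq_tsum hX, MvPowerSeries.ext_iff]

lemma IsExpT.apply_eq_flow (hX : VFOrderGE X 2) {e : FDiff n} (he : IsExpT e t X) (h : FPS n) :
    e.unop h = flow X t h :=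
  congr($(algHom_ext_of_Z (Φ := e.unop.toAlgHom) (Ψ := flowAlgHom hX t) ((isExpT_iff hX).1 he)) h)

lemma map_flow_of_semiconj (Φ : FPS n →ₐ[ℂ] FPS n) (hX : VFOrderGE X 2) (hY : VFOrderGE Y 2)
    (hΦ : Function.Semiconj Φ X Y) (t : ℂ) (h : FPS n) : Φ (flow X t h) = flow Y t (Φ h) := by
  have hE (J : ℕ) : Φ (expTrunc X t J h) = expTrunc Y t J (Φ h) := by
    simp only [expTrunc_apply, map_sum, map_smul, (hΦ.iterate_right _).eq]
  refine eq_of_forall_orderGE_sub fun J => OrderGE.mono (N := J + 1) ?_ (Nat.le_succ J)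
  have hsplit : Φ (flow X t h) - flow Y t (Φ h) =
      Φ (flow X t h - expTrunc X t J h) - (flow Y t (Φ h) - expTrunc Y t J (Φ h)) := by
    rw [map_sub, hE]; abel
  rw [hsplit]
  exact ((orderGE_flow_sub_expTrunc hX h J).map_algHom Φ).sub (orderGE_flow_sub_expTrunc hY _ J)

open Finset in
lemma eq_of_flow_eq (hX : VFOrderGE X 2) (hY : VFOrderGE Y 2) (ht : t ≠ 0)
    (h : ∀ i, flow X t (Z i) = flow Y t (Z i)) : X = Y := by
  suffices hΔ : ∀ m, VFOrderGE (X - Y) (m + 2) from derivation_ext_of_Z fun i =>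
    eq_of_forall_orderGE_sub fun N => by simpa using (hΔ N i).mono (by omega)
  intro m
  induction m with
  | zero => exact fun i => by simpa using (hX i).sub (hY i)
  | succ m ih =>
    have hiter {F : FPS n} (hF : OrderGE F 1) (j : ℕ) :
        OrderGE ((⇑X)^[j] F - (⇑Y)^[j] F) (m + 1 + j) := by
      induction j with
      | zero => simpa using orderGE_zero_left _
      | succ j ihj =>
        have hsplit : (⇑X)^[j + 1] F - (⇑Y)^[j + 1] F =
            X ((⇑X)^[j] F - (⇑Y)^[j] F) + (X - Y) ((⇑Y)^[j] F) := by
          simp only [Function.iterate_succ_apply', map_sub, Derivation.sub_apply]; abel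
        rw [hsplit]
        exact (ihj.derivation_apply hX).add
          (((hF.iterate_derivation hY j).derivation_apply ih).mono (by omega))
    intro i
    have hE : expTrunc X t (m + 2) (Z i) - expTrunc Y t (m + 2) (Z i) =
        ∑ j ∈ range (m + 1), (t ^ (j + 2) / (j + 2).factorial : ℂ) •
          ((⇑X)^[j + 2] (Z i) - (⇑Y)^[j + 2] (Z i)) + t • (X - Y) (Z i) := by
      rw [expTrunc_apply, expTrunc_apply, ← sum_sub_distrib, sum_range_succ', sum_range_succ']
      simp [smul_sub]
    have hsplit : t • (X - Y) (Z i) = (flow Y t (Z i) - expTrunc Y t (m + 2) (Z i))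
        - (flow X t (Z i) - expTrunc X t (m + 2) (Z i))
        - ∑ j ∈ range (m + 1), (t ^ (j + 2) / (j + 2).factorial : ℂ) •
          ((⇑X)^[j + 2] (Z i) - (⇑Y)^[j + 2] (Z i)) := by
      rw [h i]
      linear_combination (norm := module) -hE
    refine OrderGE.of_smul ht ?_
    rw [hsplit]
    exact ((orderGE_flow_sub_expTrunc hY _ _).sub (orderGE_flow_sub_expTrunc hX _ _)).sub
      (OrderGE.sum fun j _ => ((hiter (orderGE_Z i) (j + 2)).smul _).mono (by omega))

lemma pushforward_eq_self_of_commute_flow (hX : VFOrderGE X 2) (ht : t ≠ 0)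
    (σ : FPS n ≃ₐ[ℂ] FPS n) (hσ : Function.Commute σ (flow X t)) : pushforward σ X = X := by
  refine eq_of_flow_eq (hX.pushforward σ) hX ht fun i => ?_
  calc flow (pushforward σ X) t (Z i) = flow (pushforward σ X) t (σ (σ.symm (Z i))) := by
        rw [σ.apply_symm_apply]
    _ = σ (flow X t (σ.symm (Z i))) :=
        (map_flow_of_semiconj σ.toAlgHom hX (hX.pushforward σ) (semiconj_pushforward σ X) t _).symm
    _ = flow X t (Z i) := by rw [hσ.eq, σ.apply_symm_apply]

end Flow

lemma mul_comm_iff_commute {f g : FDiff n} : f * g = g * f ↔ Function.Commute f.unop g.unop := by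
  rw [← MulOpposite.unop_inj, MulOpposite.unop_mul, MulOpposite.unop_mul, AlgEquiv.ext_iff]
  exact ⟨fun h x => (h x).symm, fun h x => (h x).symm⟩

/-- if a formal diffeomorphism commutes with the time-one map
`exp X̂` of a formal vector field `X̂ ∈ X̂_k(ℂⁿ,0)`, `k ≥ 1` (so vanishing to
order `≥ 2`), then it commutes with `exp (t X̂)` for every `t ∈ ℂ`. -/
theorem commutes_with_flow_of_commutes_with_time_one
    (n : ℕ) (X : FVF n) (k : ℕ) (hk : 1 ≤ k) (hX : VFOrderGE X (k + 1))
    (f e : FDiff n) (he : IsExp e X) (hcomm : f * e = e * f) :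
    ∀ (t : ℂ) (e' : FDiff n), IsExpT e' t X → f * e' = e' * f := by
  intro t e' he'
  have hX2 : VFOrderGE X 2 := fun i => (hX i).mono (by omega)
  have hf_flow_one : Function.Commute f.unop (flow X 1) := by
    simpa only [funext (he.apply_eq_flow hX2)] using mul_comm_iff_commute.1 hcomm
  have hfX : Function.Semiconj f.unop X X := by
    simpa only [pushforward_eq_self_of_commute_flow hX2 one_ne_zero f.unop hf_flow_one]
      using semiconj_pushforward f.unop X
  rw [mul_comm_iff_commute, funext (he'.apply_eq_flow hX2)]
  exact map_flow_of_semiconj f.unop.toAlgHom hX2 hX2 hfX t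

end FormalGroups
end
end

section
/- Let ω̂ be a closed formal meromorphic one-form in two variables x, y whose polar set is contained in the union of the coordinate axes: ω̂ = (P̂/(x^{n+1}y^{m+1})) dx + (Q̂/(x^{n+1}y^{m+1})) dy with P̂, Q̂ ∈ ℂ[[x,y]] and n, m ∈ ℕ, and dω̂ = 0. Then there exist λ, μ ∈ ℂ and a formal power series f̂ ∈ ℂ[[x,y]] such that ω̂ = λ dx/x + μ dy/y + d(f̂/(xⁿyᵐ)). -/
noncomputable section

/-!
On coefficients the operator `x ∂ₓ - c` multiplies the coefficient of `xᵃ yᵇ` by `a - c`.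
Closedness first forces `y ∣ P̂` and `x ∣ Q̂`; writing `P̂ = y P̂'`, `Q̂ = x Q̂'` it becomes
`(x ∂ₓ - n) Q̂' = (y ∂_y - m) P̂'`, i.e. `(a - n) Q̂'_{ab} = (b - m) P̂'_{ab}` for all `a, b`.
Hence `f̂_{ab} := P̂'_{ab} / (a - n)` (or `Q̂'_{ab} / (b - m)` when `a = n`) integrates the
form, except at the monomial `xⁿ yᵐ`, whose coefficients give the residues `λ, μ`.
-/

namespace FormalGroups
open MvPowerSeries Finsupp

def shiftedEuler {n : ℕ} (i : Fin n) (c : ℂ) (F : FPS n) : FPS n := pd i F * Z i - c • F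

section Coefficients

variable {n : ℕ} {i : Fin n}

lemma eq_zero_or_exists_eq_add_single {σ : Type*} (d : σ →₀ ℕ) (i : σ) :
    d i = 0 ∨ ∃ d', d = d' + single i 1 := by
  refine or_iff_not_imp_left.mpr fun h => ⟨d - single i 1, ?_⟩
  exact (tsub_add_cancel_of_le (single_le_iff.mpr (Nat.one_le_iff_ne_zero.mpr h))).symm

lemma Z_ne_zero (i : Fin n) : (Z i : FPS n) ≠ 0 := fun h => by
  simpa [Z] using congrArg (coeff (single i 1)) h

lemma coeff_mul_Z_of_eq_zero (F : FPS n) {d : Fin n →₀ ℕ} (h : d i = 0) :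
    coeff d (F * Z i) = 0 :=
  X_dvd_iff.mp (dvd_mul_left _ _) d h

lemma coeff_add_single_mul_Z (F : FPS n) (d : Fin n →₀ ℕ) :
    coeff (d + single i 1) (F * Z i) = coeff d F := by
  rw [Z, ← pow_one (X i), X_pow_eq, coeff_add_mul_monomial, mul_one]

lemma coeff_pd (F : FPS n) (d : Fin n →₀ ℕ) :
    coeff d (pd i F) = ((d i : ℂ) + 1) * coeff (d + single i 1) F :=
  rfl

lemma coeff_shiftedEuler (c : ℂ) (F : FPS n) (d : Fin n →₀ ℕ) :
    coeff d (shiftedEuler i c F) = ((d i : ℂ) - c) * coeff d F := by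
  rw [shiftedEuler, map_sub, map_smul, smul_eq_mul]
  obtain h | ⟨d, rfl⟩ := eq_zero_or_exists_eq_add_single d i
  · rw [coeff_mul_Z_of_eq_zero _ h, h]
    ring
  · rw [coeff_add_single_mul_Z, coeff_pd]
    simp only [Finsupp.add_apply, single_eq_same, Nat.cast_add, Nat.cast_one]
    ring

lemma shiftedEuler_add_one_mul_Z (c : ℂ) (F : FPS n) :
    shiftedEuler i (c + 1) (F * Z i) = shiftedEuler i c F * Z i := by
  ext d
  rw [coeff_shiftedEuler]
  obtain h | ⟨d, rfl⟩ := eq_zero_or_exists_eq_add_single d i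
  · rw [coeff_mul_Z_of_eq_zero _ h, coeff_mul_Z_of_eq_zero _ h, mul_zero]
  · rw [coeff_add_single_mul_Z, coeff_add_single_mul_Z, coeff_shiftedEuler]
    simp only [Finsupp.add_apply, single_eq_same, Nat.cast_add, Nat.cast_one]
    ring

lemma Z_dvd_of_Z_dvd_mul_Z {j : Fin n} (hij : i ≠ j) {F : FPS n} (h : Z i ∣ F * Z j) :
    Z i ∣ F := by
  refine X_dvd_iff.mpr fun d hd => ?_
  rw [← coeff_add_single_mul_Z (i := j)]
  exact X_dvd_iff.mp h _ (by simp [hd, hij])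

lemma Z_dvd_of_Z_dvd_shiftedEuler {c : ℂ} (hc : c ≠ 0) {F : FPS n}
    (h : Z i ∣ shiftedEuler i c F) : Z i ∣ F := by
  refine X_dvd_iff.mpr fun d hd => ?_
  have := X_dvd_iff.mp h d hd
  rw [coeff_shiftedEuler, hd, Nat.cast_zero, zero_sub] at this
  exact (mul_eq_zero.mp this).resolve_left (neg_ne_zero.mpr hc)

end Coefficients

lemma eq_single_add_single_iff {a b : ℕ} (d : Fin 2 →₀ ℕ) :
    d = single 0 a + single 1 b ↔ d 0 = a ∧ d 1 = b := by
  refine ⟨fun h => by simp [h], fun ⟨h0, h1⟩ => ?_⟩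
  ext k
  fin_cases k <;> simp [h0, h1]

lemma coeff_Z_pow_mul_Z_pow (a b : ℕ) (d : Fin 2 →₀ ℕ) :
    coeff d (Z 0 ^ a * Z 1 ^ b : FPS 2) = if d 0 = a ∧ d 1 = b then 1 else 0 := by
  rw [Z, Z, X_pow_eq, X_pow_eq, monomial_mul_monomial, one_mul, coeff_monomial]
  exact if_congr (eq_single_add_single_iff d) rfl rfl

theorem exists_eq_smul_monomial_add_shiftedEuler {a b : ℕ} {F G : FPS 2}
    (h : shiftedEuler 0 a G = shiftedEuler 1 b F) :
    ∃ (lam mu : ℂ) (f : FPS 2),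
      F = lam • (Z 0 ^ a * Z 1 ^ b) + shiftedEuler 0 a f ∧
      G = mu • (Z 0 ^ a * Z 1 ^ b) + shiftedEuler 1 b f := by
  -- At `d = (a, b)` the formula divides by zero; that coefficient of `f` is never seen.
  let f : FPS 2 := fun d =>
    if d 0 = a then coeff d G / ((d 1 : ℂ) - b) else coeff d F / ((d 0 : ℂ) - a)
  have hf (d) : coeff d f =
      if d 0 = a then coeff d G / ((d 1 : ℂ) - b) else coeff d F / ((d 0 : ℂ) - a) := rfl
  have hsub {p q : ℕ} (hpq : p ≠ q) : (p : ℂ) - q ≠ 0 := sub_ne_zero.mpr (by exact_mod_cast hpq)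
  have hcoeff (d) (hne : ¬(d 0 = a ∧ d 1 = b)) :
      coeff d F = ((d 0 : ℂ) - a) * coeff d f ∧ coeff d G = ((d 1 : ℂ) - b) * coeff d f := by
    have hd := congrArg (coeff d) h
    rw [coeff_shiftedEuler, coeff_shiftedEuler] at hd
    rw [hf]
    by_cases h0 : d 0 = a
    · have h1 : d 1 ≠ b := fun h1 => hne ⟨h0, h1⟩
      rw [h0, sub_self, zero_mul, eq_comm, mul_eq_zero, or_iff_right (hsub h1)] at hd
      simp [h0, hd, mul_div_cancel₀ _ (hsub h1)]
    · rw [if_neg h0, mul_div_cancel₀ _ (hsub h0)]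
      refine ⟨rfl, ?_⟩
      field_simp [hsub h0]
      linear_combination hd
  refine ⟨coeff (single 0 a + single 1 b) F, coeff (single 0 a + single 1 b) G, f, ?_, ?_⟩ <;>
    ext d <;>
    simp only [map_add, map_smul, smul_eq_mul, coeff_shiftedEuler, coeff_Z_pow_mul_Z_pow] <;>
    by_cases he : d 0 = a ∧ d 1 = b
  · simp [(eq_single_add_single_iff d).mpr he]
  · simp [he, hcoeff d he]
  · simp [(eq_single_add_single_iff d).mpr he]
  · simp [he, hcoeff d he]

-- The components of `ω̂` are multiplied by `x^{n+1} y^{m+1}`, and `dω̂` by `x^{n+2} y^{m+2}`.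
/-- formal integration lemma in two variables for a closed formal
meromorphic one-form `ω̂ = (P̂ dx + Q̂ dy)/(x^{n+1} y^{m+1})` with poles on the
coordinate axes: `ω̂ = λ dx/x + μ dy/y + d(f̂/(xⁿyᵐ))`.  All identities are
stated with denominators cleared (multiplied by `x^{n+1} y^{m+1}`). -/
theorem formal_integration_lemma_two_transverse_poles
    (nn mm : ℕ) (P Q : FPS 2)
    (hclosed : (pd 0 Q * Z 0 - ((nn : ℂ) + 1) • Q) * Z 1
             = (pd 1 P * Z 1 - ((mm : ℂ) + 1) • P) * Z 0) :
    ∃ (lam mu : ℂ) (f : FPS 2),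
      P = lam • (Z 0 ^ nn * Z 1 ^ (mm + 1)) + (pd 0 f * Z 0 - (nn : ℂ) • f) * Z 1 ∧
      Q = mu • (Z 0 ^ (nn + 1) * Z 1 ^ mm) + (pd 1 f * Z 1 - (mm : ℂ) • f) * Z 0 := by
  change shiftedEuler 0 (nn + 1) Q * Z 1 = shiftedEuler 1 (mm + 1) P * Z 0 at hclosed
  have hxQ : Z 0 ∣ Q := Z_dvd_of_Z_dvd_shiftedEuler (Nat.cast_add_one_ne_zero nn)
    (Z_dvd_of_Z_dvd_mul_Z (by decide) ((dvd_mul_left _ _).trans hclosed.symm.dvd))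
  have hyP : Z 1 ∣ P := Z_dvd_of_Z_dvd_shiftedEuler (Nat.cast_add_one_ne_zero mm)
    (Z_dvd_of_Z_dvd_mul_Z (by decide) ((dvd_mul_left _ _).trans hclosed.dvd))
  obtain ⟨Q, rfl⟩ := exists_eq_mul_left_of_dvd hxQ
  obtain ⟨P, rfl⟩ := exists_eq_mul_left_of_dvd hyP
  rw [shiftedEuler_add_one_mul_Z, shiftedEuler_add_one_mul_Z] at hclosed
  have hZ : (Z 0 * Z 1 : FPS 2) ≠ 0 := mul_ne_zero (Z_ne_zero 0) (Z_ne_zero 1)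
  obtain ⟨lam, mu, f, hP, hQ⟩ := exists_eq_smul_monomial_add_shiftedEuler
    (mul_left_cancel₀ hZ (by linear_combination hclosed))
  refine ⟨lam, mu, f, ?_, ?_⟩ <;>
    simp only [hP, hQ, shiftedEuler, Algebra.smul_def] <;>
    ring

end FormalGroups
end
end
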